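/- arXiv:math/0410400 — 2 statements merged into one kernel-verified Lean document; each statement's English description precedes it below -/
import Mathlib

section
/- Let G be a topological abelian group, H a discrete abelian group with a countable family of continuous homomorphisms that could fail to separate points, and suppose Γ: G → Y^X is continuous and open onto its image, where Y^X is a product of discrete countable abelian groups. Then for any subgroup S of G and any ε > 0 (with respect to a fixed metric on G), if the image Γ(S) lies in a finitely generated abelian group, there is a finitely generated subgroup H₀ of S that is ε-dense in S: for every x ∈ S there is y ∈ H₀ with d(x,y) < ε. -/
/-- Abstraction of Proposition 4.2: `G` an abelian group with an invariant pseudometric `d`,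
`Γ : G → Π x, Y x` a homomorphism into a product of countable abelian groups which is open
onto its image (openness expressed through finitely many coordinates controlling `d`). If
the image of a subgroup `S` lies in a finitely generated group, then for every `ε > 0`
there is a finitely generated subgroup `H₀ ≤ S` that is `ε`-dense in `S`. -/
theorem stmt_10 (G : Type*) [AddCommGroup G] (X : Type*) (Y : X → Type*)
    [∀ x, AddCommGroup (Y x)] [∀ x, Countable (Y x)]
    (d : G → G → ℝ)
    (hnonneg : ∀ x y, 0 ≤ d x y) (hrefl : ∀ x, d x x = 0)
    (hsymm : ∀ x y, d x y = d y x)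
    (htri : ∀ x y z, d x z ≤ d x y + d y z)
    (hinv : ∀ x y z, d (x + z) (y + z) = d x y)
    (Γ : G →+ (∀ x, Y x))
    (hopen : ∀ ε > 0, ∃ T : Finset X, ∀ g : G, (∀ t ∈ T, Γ g t = 0) → d g 0 < ε)
    (S : AddSubgroup G) (ε : ℝ) (hε : 0 < ε)
    (hfg : ∃ H' : AddSubgroup (∀ x, Y x), H'.FG ∧ AddSubgroup.map Γ S ≤ H') :
    ∃ H₀ : AddSubgroup G, H₀.FG ∧ H₀ ≤ S ∧ ∀ x ∈ S, ∃ y ∈ H₀, d x y < ε := by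
  obtain ⟨T, hT⟩ := hopen ε hε
  obtain ⟨H', hH'fg, hle⟩ := hfg
  -- projection onto the coordinates in `T`
  let π : (∀ x, Y x) →+ (∀ t : T, Y t) :=
    AddMonoidHom.mk' (fun f t => f t.1) (fun a b => rfl)
  let φ : G →+ (∀ t : T, Y t) := π.comp Γ
  -- submodules over ℤ
  let K : Submodule ℤ (∀ t : T, Y t) :=
    Submodule.map π.toIntLinearMap H'.toIntSubmodule
  have hKfg : K.FG := by
    refine Submodule.FG.map _ ?_
    rw [Submodule.fg_iff_addSubgroup_fg]
    simpa using hH'fg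
  let L : Submodule ℤ (∀ t : T, Y t) :=
    Submodule.map φ.toIntLinearMap S.toIntSubmodule
  have hLK : L ≤ K := by
    rintro _ ⟨x, hx, rfl⟩
    exact ⟨Γ x, hle ⟨x, hx, rfl⟩, rfl⟩
  haveI := isNoetherian_of_fg_of_noetherian K hKfg
  have hLfg : L.FG := by
    have h1 : (L.comap K.subtype).FG := IsNoetherian.noetherian _
    have h2 := h1.map K.subtype
    rwa [Submodule.map_comap_subtype, inf_eq_right.2 hLK] at h2
  obtain ⟨s, hs⟩ := hLfg
  have hmem : ∀ m ∈ s, ∃ g ∈ S, φ g = m := by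
    intro m hm
    have : m ∈ L := hs ▸ Submodule.subset_span hm
    rcases this with ⟨x, hx, rfl⟩
    exact ⟨x, hx, rfl⟩
  choose f hfS hfφ using hmem
  refine ⟨AddSubgroup.closure (Set.range fun m : s => f m.1 m.2), ?_, ?_, ?_⟩
  · exact (AddSubgroup.fg_iff _).2 ⟨_, rfl, Set.finite_range _⟩
  · rw [AddSubgroup.closure_le]
    rintro _ ⟨m, rfl⟩
    exact hfS m.1 m.2
  · intro x hx
    set H₀ := AddSubgroup.closure (Set.range fun m : s => f m.1 m.2) with hH₀
    have hmap : L ≤ (AddSubgroup.map φ H₀).toIntSubmodule := by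
      rw [← hs]
      refine Submodule.span_le.2 ?_
      intro m hm
      exact ⟨f m hm, AddSubgroup.subset_closure ⟨⟨m, hm⟩, rfl⟩, hfφ m hm⟩
    have hφx : φ x ∈ AddSubgroup.map φ H₀ := hmap ⟨x, hx, rfl⟩
    obtain ⟨y, hy, hyx⟩ := hφx
    refine ⟨y, hy, ?_⟩
    have hzero : ∀ t ∈ T, Γ (x - y) t = 0 := by
      intro t ht
      have := congrFun hyx ⟨t, ht⟩
      simp only [map_sub]
      have hΓ : Γ y t = Γ x t := this
      simp [Pi.sub_apply, hΓ]
    have hd := hT (x - y) hzero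
    have := hinv (x - y) 0 y
    rw [sub_add_cancel, zero_add] at this
    rw [← this] at hd
    exact hd
end

section
/- Let A, B be C*-algebras with B unital, and suppose φ, ψ: A → B and φ', ψ': B → A are unital *-homomorphisms such that φ'∘φ is approximately unitarily equivalent to id_A and φ∘ψ' is approximately unitarily equivalent to id_B, where moreover intertwining unitaries can be chosen along a common dense sequence with summable errors. Then A ≅ B (Elliott's approximate intertwining). -/
open Filter Topology

section ElliottAux

lemma aux_norm_unitary_conj {E : Type*} [NormedRing E] [StarRing E] [CStarRing E]
    {u : E} (hu : u ∈ unitary E) (z : E) : ‖u * z * star u‖ = ‖z‖ := by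
  rw [CStarRing.norm_mul_mem_unitary _ (Unitary.star_mem hu),
    CStarRing.norm_mem_unitary_mul _ hu]

lemma aux_factor {M : Type*} [NonUnitalRing M] (a b c d : M) :
    a * c * b - a * d * b = a * (c - d) * b := by
  rw [mul_sub, sub_mul]

lemma aux_conj_conj {M : Type*} [Monoid M] [StarMul M] {w : M} (hw : star w * w = 1)
    (v z : M) : (v * star w) * (w * z * star w) * star (v * star w) = v * z * star v := by
  rw [star_mul, star_star]
  have h1 : (v * star w) * (w * z * star w) * (w * star v)
      = v * (star w * w) * z * (star w * w) * star v := by simp only [mul_assoc]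
  rw [h1, hw, mul_one, mul_one]

lemma aux_conj_cancel {M : Type*} [Monoid M] [StarMul M] {u : M} (h2 : u * star u = 1)
    (z : M) : u * (star u * z * u) * star u = z := by
  have h1 : u * (star u * z * u) * star u = (u * star u) * z * (u * star u) := by
    simp only [mul_assoc]
  rw [h1, h2, one_mul, mul_one]

lemma aux_conj_mul {M : Type*} [Monoid M] [StarMul M] {x : M} (h : star x * x = 1)
    (c d : M) : (x * c * star x) * (x * d * star x) = x * (c * d) * star x := by
  have h1 : (x * c * star x) * (x * d * star x) = x * c * (star x * x) * d * star x := by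
    simp only [mul_assoc]
  rw [h1, h, mul_one, mul_assoc x c d]

lemma aux_spectralRadius_eq {A : Type*} [NormedRing A] [StarRing A] [CStarRing A]
    [NormedAlgebra ℂ A] [CompleteSpace A] {a : A} (ha : IsSelfAdjoint a) :
    spectralRadius ℂ a = ‖a‖₊ := by
  have hconst : Tendsto (fun _n : ℕ => ((‖a‖₊ : ENNReal))) atTop (nhds (‖a‖₊ : ENNReal)) :=
    tendsto_const_nhds
  refine tendsto_nhds_unique ?_ hconst
  convert (spectrum.pow_nnnorm_pow_one_div_tendsto_nhds_spectralRadius (a : A)).comp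
      (show Tendsto (fun n : ℕ => 2 ^ n) atTop atTop from tendsto_pow_atTop_atTop_of_one_lt one_lt_two) using 1
  refine funext fun n => ?_
  rw [Function.comp_apply, ha.nnnorm_pow_two_pow, ENNReal.coe_pow, ← ENNReal.rpow_natCast,
    ← ENNReal.rpow_mul]
  simp

lemma aux_contractive {A B : Type*}
    [NormedRing A] [StarRing A] [CStarRing A] [NormedAlgebra ℂ A] [CompleteSpace A]
    [NormedRing B] [StarRing B] [CStarRing B] [NormedAlgebra ℂ B] [CompleteSpace B]
    (f : A →⋆ₐ[ℂ] B) (a : A) : ‖f a‖ ≤ ‖a‖ := by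
  have hsa' : IsSelfAdjoint (star a * a) := IsSelfAdjoint.star_mul_self a
  have hsa : IsSelfAdjoint (f (star a * a)) := hsa'.map f
  have hsp : spectralRadius ℂ (f (star a * a)) ≤ spectralRadius ℂ (star a * a) :=
    iSup_le_iSup_of_subset (AlgHom.spectrum_apply_subset f (star a * a))
  rw [aux_spectralRadius_eq hsa, aux_spectralRadius_eq hsa'] at hsp
  have h2 : ‖f (star a * a)‖₊ ≤ ‖star a * a‖₊ := by exact_mod_cast hsp
  have h1 : ‖f a‖₊ ^ 2 ≤ ‖a‖₊ ^ 2 := by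
    calc ‖f a‖₊ ^ 2 = ‖star (f a) * f a‖₊ := by rw [CStarRing.nnnorm_star_mul_self, sq]
      _ = ‖f (star a * a)‖₊ := by rw [← map_star, ← map_mul]
      _ ≤ ‖star a * a‖₊ := h2
      _ = ‖a‖₊ ^ 2 := by rw [CStarRing.nnnorm_star_mul_self, sq]
  have := (pow_le_pow_iff_left₀ zero_le zero_le (two_ne_zero)).mp h1
  exact_mod_cast this

lemma aux_finset {X : Type*} {g : ℕ → X → ℝ}
    (h : ∀ a : X, Tendsto (fun n => g n a) atTop (nhds 0)) (S : Finset X) {ε : ℝ}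
    (hε : 0 < ε) : ∃ n, ∀ a ∈ S, g n a < ε := by
  have : ∀ᶠ n in atTop, ∀ a ∈ S, g n a < ε := by
    rw [Filter.eventually_all_finset]
    exact fun a _ => (h a).eventually_lt_const hε
  exact this.exists

lemma aux_limit {X E : Type*} [NormedAddCommGroup X] [NormedAddCommGroup E] [CompleteSpace E]
    (h : ℕ → X → E) (lip : ∀ n (a a' : X), ‖h n a - h n a'‖ ≤ ‖a - a'‖)
    (d : ℕ → X) (hd : DenseRange d)
    (inc : ∀ i n, i ≤ n → ‖h (n + 1) (d i) - h n (d i)‖ ≤ 2 * (1 / 2) ^ n) (a : X) :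
    ∃ L : E, Tendsto (fun n => h n a) atTop (nhds L) := by
  refine cauchySeq_tendsto_of_complete ?_
  have tel : ∀ i m n, i ≤ m → m ≤ n → ‖h n (d i) - h m (d i)‖ ≤ 4 * (1 / 2 : ℝ) ^ m := by
    intro i m n him hmn
    have key : ∀ k, m ≤ k → ‖h k (d i) - h m (d i)‖ ≤ 4 * (1/2:ℝ)^m - 4 * (1/2:ℝ)^k := by
      intro k
      induction k with
      | zero =>
        intro hk
        have : m = 0 := Nat.le_zero.mp hk
        subst this
        simp
      | succ k ih =>
        intro hk
        rcases Nat.lt_or_ge m (k + 1) with hlt | hge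
        · have hmk : m ≤ k := Nat.lt_succ_iff.mp hlt
          calc ‖h (k+1) (d i) - h m (d i)‖
              ≤ ‖h (k+1) (d i) - h k (d i)‖ + ‖h k (d i) - h m (d i)‖ :=
                norm_sub_le_norm_sub_add_norm_sub _ _ _
            _ ≤ 2 * (1/2:ℝ)^k + (4 * (1/2:ℝ)^m - 4 * (1/2:ℝ)^k) :=
                add_le_add (inc i k (le_trans him hmk)) (ih hmk)
            _ = 4 * (1/2:ℝ)^m - 4 * (1/2:ℝ)^(k+1) := by ring
        · have : m = k + 1 := le_antisymm hk hge
          subst this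
          simp
    calc ‖h n (d i) - h m (d i)‖ ≤ 4 * (1/2:ℝ)^m - 4 * (1/2:ℝ)^n := key n hmn
      _ ≤ 4 * (1/2:ℝ)^m := by
          have : (0:ℝ) ≤ 4 * (1/2:ℝ)^n := by positivity
          linarith
  rw [Metric.cauchySeq_iff]
  intro ε hε
  obtain ⟨i, hi⟩ := hd.exists_dist_lt a (show (0:ℝ) < ε/4 by linarith)
  obtain ⟨M, hM⟩ : ∃ M : ℕ, 4 * (1/2:ℝ)^M < ε/4 := by
    obtain ⟨M, hM⟩ := exists_pow_lt_of_lt_one (show (0:ℝ) < ε/16 by linarith)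
      (show (1/2:ℝ) < 1 by norm_num)
    exact ⟨M, by nlinarith⟩
  refine ⟨max i M, fun m hm n hn => ?_⟩
  have hdist : ∀ k, max i M ≤ k → dist (h k a) (h k (d i)) < ε / 4 := by
    intro k _
    rw [dist_eq_norm]
    calc ‖h k a - h k (d i)‖ ≤ ‖a - d i‖ := lip k a (d i)
      _ = dist a (d i) := (dist_eq_norm a (d i)).symm
      _ < ε / 4 := hi
  have hmid : dist (h m (d i)) (h n (d i)) < ε / 4 := by
    have hpow : ∀ k, max i M ≤ k → 4 * (1/2:ℝ)^k < ε/4 := by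
      intro k hk
      have : (1/2:ℝ)^k ≤ (1/2:ℝ)^M :=
        pow_le_pow_of_le_one (by norm_num) (by norm_num) (le_trans (le_max_right i M) hk)
      nlinarith
    rcases le_total m n with hmn | hnm
    · rw [dist_eq_norm, norm_sub_rev]
      calc ‖h n (d i) - h m (d i)‖ ≤ 4 * (1/2:ℝ)^m :=
            tel i m n (le_trans (le_max_left i M) hm) hmn
        _ < ε/4 := hpow m hm
    · rw [dist_eq_norm]
      calc ‖h m (d i) - h n (d i)‖ ≤ 4 * (1/2:ℝ)^n :=
            tel i n m (le_trans (le_max_left i M) hn) hnm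
        _ < ε/4 := hpow n hn
  calc dist (h m a) (h n a)
      ≤ dist (h m a) (h m (d i)) + dist (h m (d i)) (h n (d i)) + dist (h n (d i)) (h n a) :=
        dist_triangle4 _ _ _ _
    _ < ε/4 + ε/4 + ε/4 := by
        have := hdist m hm
        have := hdist n hn
        rw [dist_comm (h n (d i))]
        linarith
    _ ≤ ε := by linarith

end ElliottAux
section MoreAux

lemma aux_norm_unitary_conj' {E : Type*} [NormedRing E] [StarRing E] [CStarRing E]
    {u : E} (hu : u ∈ unitary E) (z : E) : ‖star u * z * u‖ = ‖z‖ := by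
  rw [CStarRing.norm_mul_mem_unitary _ hu,
    CStarRing.norm_mem_unitary_mul _ (Unitary.star_mem hu)]

lemma aux_tri3 {E : Type*} [SeminormedAddCommGroup E] (x y z t : E) :
    ‖x - t‖ ≤ ‖x - y‖ + ‖y - z‖ + ‖z - t‖ := by
  calc ‖x - t‖ ≤ ‖x - z‖ + ‖z - t‖ := norm_sub_le_norm_sub_add_norm_sub _ _ _
    _ ≤ ‖x - y‖ + ‖y - z‖ + ‖z - t‖ := by
        have := norm_sub_le_norm_sub_add_norm_sub x y z
        linarith

lemma aux_map_unitary {R S F : Type*} [Monoid R] [StarMul R] [Monoid S] [StarMul S]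
    [FunLike F R S] [MonoidHomClass F R S] [StarHomClass F R S] (f : F) {u : R}
    (hu : u ∈ unitary R) : f u ∈ unitary S := by
  rw [Unitary.mem_iff] at hu ⊢
  constructor
  · rw [← map_star, ← map_mul, hu.1, map_one]
  · rw [← map_star, ← map_mul, hu.2, map_one]

/-- conjugated map -/
def cj {A B : Type*} [Mul B] [Star B] (f : A → B) (x : B) (a : A) : B := x * f a * star x

@[simp] lemma cj_apply {A B : Type*} [Mul B] [Star B] (f : A → B) (x : B) (a : A) :
    cj f x a = x * f a * star x := rfl

end MoreAux

set_option maxHeartbeats 1000000 in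
/-- Elliott's approximate intertwining: if `φ, ψ : A → B` and `φ', ψ' : B → A` are unital
*-homomorphisms between separable unital C*-algebras with `φ' ∘ φ` approximately unitarily
equivalent to `id_A` and `φ ∘ ψ'` approximately unitarily equivalent to `id_B`, then
`A ≅ B`. -/
theorem stmt_19 (A B : Type*)
    [NormedRing A] [StarRing A] [CStarRing A] [NormedAlgebra ℂ A] [CompleteSpace A]
    [NormedRing B] [StarRing B] [CStarRing B] [NormedAlgebra ℂ B] [CompleteSpace B]
    (dA : ℕ → A) (hdA : DenseRange dA) (dB : ℕ → B) (hdB : DenseRange dB)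
    (φ ψ : A →⋆ₐ[ℂ] B) (φ' ψ' : B →⋆ₐ[ℂ] A)
    (hA : ∃ u : ℕ → A, (∀ n, u n ∈ unitary A) ∧
      ∀ a : A, Tendsto (fun n => ‖u n * φ' (φ a) * star (u n) - a‖) atTop (nhds 0))
    (hB : ∃ u : ℕ → B, (∀ n, u n ∈ unitary B) ∧
      ∀ b : B, Tendsto (fun n => ‖u n * φ (ψ' b) * star (u n) - b‖) atTop (nhds 0)) :
    Nonempty (A ≃⋆ₐ[ℂ] B) := by
  classical
  obtain ⟨uA, huA, hA⟩ := hA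
  obtain ⟨uB, huB, hB⟩ := hB
  -- the combined unitaries on the A side
  set m1 : ℕ → A := fun n => uA n * φ' (uB n) * star (uA n) with hm1
  have hm1u : ∀ n, m1 n ∈ unitary A := fun n =>
    mul_mem (mul_mem (huA n) (aux_map_unitary φ' (huB n))) (Unitary.star_mem (huA n))
  -- `ψ' ∘ φ` is approximately unitarily equivalent to `id A`
  have hA2 : ∀ a : A, Tendsto (fun n => ‖m1 n * ψ' (φ a) * star (m1 n) - a‖) atTop (nhds 0) := by
    intro a
    set X := ψ' (φ a) with hX
    set Y := φ' (φ (ψ' (φ a))) with hY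
    set Z := φ' (φ a) with hZ
    have bound : ∀ n, ‖m1 n * X * star (m1 n) - a‖ ≤
        ‖uA n * Y * star (uA n) - X‖ + ‖uB n * φ X * star (uB n) - φ a‖
          + ‖uA n * Z * star (uA n) - a‖ := by
      intro n
      set u := uA n with hu_def
      set w := φ' (uB n) with hw_def
      have hu : u ∈ unitary A := huA n
      have hw : w ∈ unitary A := aux_map_unitary φ' (huB n)
      have huw : u * w ∈ unitary A := mul_mem hu hw
      have hu1 : star u * u = 1 := (Unitary.mem_iff.mp hu).1
      have hu2 : u * star u = 1 := (Unitary.mem_iff.mp hu).2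
      have step1 : ‖m1 n * X * star (m1 n) - u * (w * Y * star w) * star u‖
          = ‖uA n * Y * star (uA n) - X‖ := by
        have e1 : m1 n * X * star (m1 n) - u * (w * Y * star w) * star u
            = (u * w) * (star u * X * u - Y) * star (u * w) := by
          simp only [hm1, ← hu_def, ← hw_def, star_mul, star_star, mul_sub, sub_mul, mul_assoc]
        have e2 : star u * X * u - Y = star u * (X - u * Y * star u) * u := by
          have hc : star u * (u * Y * star u) * u = Y := by
            have := aux_conj_cancel (u := star u)
              (by rw [star_star]; exact hu1) Y
            simpa [star_star] using this
          rw [mul_sub, sub_mul, hc]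
        rw [e1, aux_norm_unitary_conj huw, e2, aux_norm_unitary_conj' hu, norm_sub_rev]
      have step2 : ‖u * (w * Y * star w) * star u - u * Z * star u‖
          ≤ ‖uB n * φ X * star (uB n) - φ a‖ := by
        have e3 : u * (w * Y * star w) * star u - u * Z * star u
            = u * ((w * Y * star w) - Z) * star u := (aux_factor _ _ _ _)
        have e4 : (w * Y * star w) - Z = φ' (uB n * φ X * star (uB n) - φ a) := by
          rw [map_sub, map_mul, map_mul, map_star, hw_def, hY, hZ, hX]
        rw [e3, aux_norm_unitary_conj hu, e4]
        exact aux_contractive φ' _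
      calc ‖m1 n * X * star (m1 n) - a‖
          ≤ ‖m1 n * X * star (m1 n) - u * (w * Y * star w) * star u‖
            + ‖u * (w * Y * star w) * star u - u * Z * star u‖
            + ‖u * Z * star u - a‖ := aux_tri3 _ _ _ _
        _ ≤ ‖uA n * Y * star (uA n) - X‖ + ‖uB n * φ X * star (uB n) - φ a‖
            + ‖uA n * Z * star (uA n) - a‖ := by
            refine add_le_add (add_le_add ?_ step2) ?_
            · exact step1.le
            · exact le_rfl
    have hsum : Tendsto (fun n => ‖uA n * Y * star (uA n) - X‖
        + ‖uB n * φ X * star (uB n) - φ a‖ + ‖uA n * Z * star (uA n) - a‖) atTop (nhds 0) := by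
      have t1 := hA X
      have t2 := hB (φ a)
      have t3 := hA a
      have h4 := (t1.add t2).add t3
      rwa [add_zero, add_zero] at h4
    exact squeeze_zero (fun n => norm_nonneg _) bound hsum
  -- finite approximation lemmas
  have exA : ∀ (S : Finset A) {ε : ℝ}, 0 < ε →
      ∃ u, u ∈ unitary A ∧ ∀ a ∈ S, ‖u * ψ' (φ a) * star u - a‖ < ε := by
    intro S ε hε
    obtain ⟨n, hn⟩ := aux_finset (g := fun n a => ‖m1 n * ψ' (φ a) * star (m1 n) - a‖) hA2 S hε
    exact ⟨m1 n, hm1u n, hn⟩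
  have exB : ∀ (S : Finset B) {ε : ℝ}, 0 < ε →
      ∃ v, v ∈ unitary B ∧ ∀ b ∈ S, ‖v * φ (ψ' b) * star v - b‖ < ε := by
    intro S ε hε
    obtain ⟨n, hn⟩ := aux_finset (g := fun n b => ‖uB n * φ (ψ' b) * star (uB n) - b‖) hB S hε
    exact ⟨uB n, huB n, hn⟩
  -- the finite sets used in the recursion
  let SB : ℕ → B → Finset B := fun n x =>
    ((Finset.range (n+1)).image dB) ∪ ((Finset.range (n+1)).image fun i => cj φ x (dA i))
  let SA : ℕ → A → Finset A := fun n y =>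
    ((Finset.range (n+1)).image dA) ∪ ((Finset.range (n+1)).image fun i => cj ψ' y (dB i))
  -- the two recursion steps
  have exStepB : ∀ (n : ℕ) (x : B) (y : A), ∃ x' : B, x' ∈ unitary B ∧
      (y ∈ unitary A → ∀ b ∈ SB n x, ‖cj φ x' (cj ψ' y b) - b‖ < (1/2:ℝ)^n) := by
    intro n x y
    by_cases hy : y ∈ unitary A
    · obtain ⟨v, hv, hv2⟩ := exB (SB n x) (show (0:ℝ) < (1/2:ℝ)^n by positivity)
      refine ⟨v * star (φ y), mul_mem hv (Unitary.star_mem (aux_map_unitary φ hy)),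
        fun _ b hb => ?_⟩
      have : cj φ (v * star (φ y)) (cj ψ' y b) = v * φ (ψ' b) * star v := by
        simp only [cj_apply, map_mul, map_star]
        exact aux_conj_conj ((Unitary.mem_iff.mp (aux_map_unitary φ hy)).1) v (φ (ψ' b))
      rw [this]
      exact hv2 b hb
    · exact ⟨1, one_mem _, fun hy' => absurd hy' hy⟩
  have exStepA : ∀ (n : ℕ) (x' : B) (y : A), ∃ y' : A, y' ∈ unitary A ∧
      (x' ∈ unitary B → ∀ a ∈ SA n y, ‖cj ψ' y' (cj φ x' a) - a‖ < (1/2:ℝ)^n) := by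
    intro n x' y
    by_cases hx : x' ∈ unitary B
    · obtain ⟨u, hu, hu2⟩ := exA (SA n y) (show (0:ℝ) < (1/2:ℝ)^n by positivity)
      refine ⟨u * star (ψ' x'), mul_mem hu (Unitary.star_mem (aux_map_unitary ψ' hx)),
        fun _ a ha => ?_⟩
      have : cj ψ' (u * star (ψ' x')) (cj φ x' a) = u * ψ' (φ a) * star u := by
        simp only [cj_apply, map_mul, map_star]
        exact aux_conj_conj ((Unitary.mem_iff.mp (aux_map_unitary ψ' hx)).1) u (ψ' (φ a))
      rw [this]
      exact hu2 a ha
    · exact ⟨1, one_mem _, fun hx' => absurd hx' hx⟩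
  -- the recursively chosen unitaries
  let p : ℕ → B × A := fun n => Nat.rec (motive := fun _ => B × A)
    ((1 : B), (exStepA 0 1 1).choose)
    (fun n q => ((exStepB n q.1 q.2).choose,
      (exStepA (n+1) (exStepB n q.1 q.2).choose q.2).choose)) n
  have hU : ∀ n, (p n).1 ∈ unitary B ∧ (p n).2 ∈ unitary A := by
    intro n
    induction n with
    | zero => exact ⟨one_mem _, (exStepA 0 1 1).choose_spec.1⟩
    | succ n ih =>
      exact ⟨(exStepB n (p n).1 (p n).2).choose_spec.1,
        (exStepA (n+1) (exStepB n (p n).1 (p n).2).choose (p n).2).choose_spec.1⟩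
  have hP : ∀ n i, i ≤ n → ‖cj ψ' (p n).2 (cj φ (p n).1 (dA i)) - dA i‖ < (1/2:ℝ)^n := by
    intro n i hin
    have hmem : dA i ∈ SA n (if n = 0 then 1 else (p (n-1)).2) := by
      exact Finset.mem_union_left _
        (Finset.mem_image_of_mem dA (Finset.mem_range.mpr (Nat.lt_succ_of_le hin)))
    cases n with
    | zero =>
      have := (exStepA 0 1 1).choose_spec.2 (one_mem _) (dA i) (by simpa using hmem)
      exact this
    | succ n =>
      have := (exStepA (n+1) (exStepB n (p n).1 (p n).2).choose (p n).2).choose_spec.2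
        ((exStepB n (p n).1 (p n).2).choose_spec.1) (dA i) (by simpa using hmem)
      exact this
  have hP2 : ∀ n i, i ≤ n+1 →
      ‖cj ψ' (p (n+1)).2 (cj φ (p (n+1)).1 (cj ψ' (p n).2 (dB i))) - cj ψ' (p n).2 (dB i)‖
        < (1/2:ℝ)^(n+1) := by
    intro n i hin
    have hmem : cj ψ' (p n).2 (dB i) ∈ SA (n+1) (p n).2 :=
      Finset.mem_union_right _
        (Finset.mem_image_of_mem _ (Finset.mem_range.mpr (Nat.lt_succ_of_le hin)))
    exact (exStepA (n+1) (exStepB n (p n).1 (p n).2).choose (p n).2).choose_spec.2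
      ((exStepB n (p n).1 (p n).2).choose_spec.1) _ hmem
  have hQ1 : ∀ n i, i ≤ n →
      ‖cj φ (p (n+1)).1 (cj ψ' (p n).2 (dB i)) - dB i‖ < (1/2:ℝ)^n := by
    intro n i hin
    have hmem : dB i ∈ SB n (p n).1 :=
      Finset.mem_union_left _
        (Finset.mem_image_of_mem dB (Finset.mem_range.mpr (Nat.lt_succ_of_le hin)))
    exact (exStepB n (p n).1 (p n).2).choose_spec.2 (hU n).2 _ hmem
  have hQ2 : ∀ n i, i ≤ n →
      ‖cj φ (p (n+1)).1 (cj ψ' (p n).2 (cj φ (p n).1 (dA i))) - cj φ (p n).1 (dA i)‖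
        < (1/2:ℝ)^n := by
    intro n i hin
    have hmem : cj φ (p n).1 (dA i) ∈ SB n (p n).1 :=
      Finset.mem_union_right _
        (Finset.mem_image_of_mem _ (Finset.mem_range.mpr (Nat.lt_succ_of_le hin)))
    exact (exStepB n (p n).1 (p n).2).choose_spec.2 (hU n).2 _ hmem
  -- Lipschitz bounds
  have LipA : ∀ {x : B}, x ∈ unitary B → ∀ a a' : A, ‖cj φ x a - cj φ x a'‖ ≤ ‖a - a'‖ := by
    intro x hx a a'
    have e : cj φ x a - cj φ x a' = x * φ (a - a') * star x := by
      simp only [cj_apply, map_sub]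
      exact aux_factor _ _ _ _
    rw [e, aux_norm_unitary_conj hx]
    exact aux_contractive φ _
  have LipB : ∀ {y : A}, y ∈ unitary A → ∀ b b' : B, ‖cj ψ' y b - cj ψ' y b'‖ ≤ ‖b - b'‖ := by
    intro y hy b b'
    have e : cj ψ' y b - cj ψ' y b' = y * ψ' (b - b') * star y := by
      simp only [cj_apply, map_sub]
      exact aux_factor _ _ _ _
    rw [e, aux_norm_unitary_conj hy]
    exact aux_contractive ψ' _
  -- increments
  have incA : ∀ i n, i ≤ n →
      ‖cj φ (p (n+1)).1 (dA i) - cj φ (p n).1 (dA i)‖ ≤ 2 * (1/2:ℝ)^n := by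
    intro i n hin
    calc ‖cj φ (p (n+1)).1 (dA i) - cj φ (p n).1 (dA i)‖
        ≤ ‖cj φ (p (n+1)).1 (dA i) - cj φ (p (n+1)).1 (cj ψ' (p n).2 (cj φ (p n).1 (dA i)))‖
          + ‖cj φ (p (n+1)).1 (cj ψ' (p n).2 (cj φ (p n).1 (dA i))) - cj φ (p n).1 (dA i)‖ :=
          norm_sub_le_norm_sub_add_norm_sub _ _ _
      _ ≤ ‖dA i - cj ψ' (p n).2 (cj φ (p n).1 (dA i))‖ + (1/2:ℝ)^n :=
          add_le_add (LipA (hU (n+1)).1 _ _) (hQ2 n i hin).le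
      _ ≤ (1/2:ℝ)^n + (1/2:ℝ)^n := by
          refine add_le_add ?_ le_rfl
          rw [norm_sub_rev]
          exact (hP n i hin).le
      _ = 2 * (1/2:ℝ)^n := by ring
  have incB : ∀ i n, i ≤ n →
      ‖cj ψ' (p (n+1)).2 (dB i) - cj ψ' (p n).2 (dB i)‖ ≤ 2 * (1/2:ℝ)^n := by
    intro i n hin
    calc ‖cj ψ' (p (n+1)).2 (dB i) - cj ψ' (p n).2 (dB i)‖
        ≤ ‖cj ψ' (p (n+1)).2 (dB i) - cj ψ' (p (n+1)).2 (cj φ (p (n+1)).1 (cj ψ' (p n).2 (dB i)))‖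
          + ‖cj ψ' (p (n+1)).2 (cj φ (p (n+1)).1 (cj ψ' (p n).2 (dB i))) - cj ψ' (p n).2 (dB i)‖ :=
          norm_sub_le_norm_sub_add_norm_sub _ _ _
      _ ≤ ‖dB i - cj φ (p (n+1)).1 (cj ψ' (p n).2 (dB i))‖ + (1/2:ℝ)^(n+1) :=
          add_le_add (LipB (hU (n+1)).2 _ _) (hP2 n i (le_trans hin (Nat.le_succ n))).le
      _ ≤ (1/2:ℝ)^n + (1/2:ℝ)^n := by
          refine add_le_add ?_ ?_
          · rw [norm_sub_rev]
            exact (hQ1 n i hin).le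
          · exact pow_le_pow_of_le_one (by norm_num) (by norm_num) (Nat.le_succ n)
      _ = 2 * (1/2:ℝ)^n := by ring
  -- limit maps
  have limA : ∀ a : A, ∃ L : B, Tendsto (fun n => cj φ (p n).1 a) atTop (nhds L) :=
    aux_limit (fun n a => cj φ (p n).1 a) (fun n => LipA (hU n).1) dA hdA incA
  have limB : ∀ b : B, ∃ L : A, Tendsto (fun n => cj ψ' (p n).2 b) atTop (nhds L) :=
    aux_limit (fun n b => cj ψ' (p n).2 b) (fun n => LipB (hU n).2) dB hdB incB
  choose Φ hΦ using limA
  choose Ψ hΨ using limB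
  -- Lipschitz/continuity of the limits
  have LipΦ : ∀ a a' : A, ‖Φ a - Φ a'‖ ≤ ‖a - a'‖ := by
    intro a a'
    exact le_of_tendsto ((hΦ a).sub (hΦ a')).norm
      (Eventually.of_forall fun n => LipA (hU n).1 a a')
  have LipΨ : ∀ b b' : B, ‖Ψ b - Ψ b'‖ ≤ ‖b - b'‖ := by
    intro b b'
    exact le_of_tendsto ((hΨ b).sub (hΨ b')).norm
      (Eventually.of_forall fun n => LipB (hU n).2 b b')
  have contΦ : Continuous Φ := by
    refine (LipschitzWith.of_dist_le_mul (K := 1) fun a a' => ?_).continuous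
    rw [dist_eq_norm, dist_eq_norm, NNReal.coe_one, one_mul]
    exact LipΦ a a'
  have contΨ : Continuous Ψ := by
    refine (LipschitzWith.of_dist_le_mul (K := 1) fun b b' => ?_).continuous
    rw [dist_eq_norm, dist_eq_norm, NNReal.coe_one, one_mul]
    exact LipΨ b b'
  -- algebraic properties of Φ
  have mulΦ : ∀ a a' : A, Φ (a * a') = Φ a * Φ a' := by
    intro a a'
    refine tendsto_nhds_unique (hΦ (a * a')) (((hΦ a).mul (hΦ a')).congr fun n => ?_)
    simp only [cj_apply]
    rw [aux_conj_mul (Unitary.mem_iff.mp (hU n).1).1, map_mul]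
  have addΦ : ∀ a a' : A, Φ (a + a') = Φ a + Φ a' := by
    intro a a'
    refine tendsto_nhds_unique (hΦ (a + a')) (((hΦ a).add (hΦ a')).congr fun n => ?_)
    simp only [cj_apply, map_add, mul_add, add_mul]
  have smulΦ : ∀ (c : ℂ) (a : A), Φ (c • a) = c • Φ a := by
    intro c a
    refine tendsto_nhds_unique (hΦ (c • a)) (((hΦ a).const_smul c).congr fun n => ?_)
    simp only [cj_apply, map_smul, mul_smul_comm, smul_mul_assoc]
  have starΦ : ∀ a : A, Φ (star a) = star (Φ a) := by
    intro a
    refine tendsto_nhds_unique (hΦ (star a)) ((hΦ a).star.congr fun n => ?_)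
    simp only [cj_apply, star_mul, star_star, map_star, mul_assoc]
  -- inverse identities
  have leftInvPt : ∀ i : ℕ, Ψ (Φ (dA i)) = dA i := by
    intro i
    set a := dA i with ha
    have h3 : ∀ n, i ≤ n → ‖Ψ (Φ a) - a‖ ≤ ‖Ψ (Φ a) - cj ψ' (p n).2 (Φ a)‖
        + ‖Φ a - cj φ (p n).1 a‖ + (1/2:ℝ)^n := by
      intro n hn
      calc ‖Ψ (Φ a) - a‖
          ≤ ‖Ψ (Φ a) - cj ψ' (p n).2 (Φ a)‖
            + ‖cj ψ' (p n).2 (Φ a) - cj ψ' (p n).2 (cj φ (p n).1 a)‖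
            + ‖cj ψ' (p n).2 (cj φ (p n).1 a) - a‖ := aux_tri3 _ _ _ _
        _ ≤ ‖Ψ (Φ a) - cj ψ' (p n).2 (Φ a)‖ + ‖Φ a - cj φ (p n).1 a‖ + (1/2:ℝ)^n := by
            refine add_le_add (add_le_add le_rfl (LipB (hU n).2 _ _)) ?_
            exact (hP n i hn).le
    have c1 : Tendsto (fun n => ‖Ψ (Φ a) - cj ψ' (p n).2 (Φ a)‖) atTop (nhds 0) := by
      have h0 := Filter.Tendsto.const_sub (Ψ (Φ a)) (hΨ (Φ a))
      rw [sub_self] at h0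
      have h1 := h0.norm
      rwa [norm_zero] at h1
    have c2 : Tendsto (fun n => ‖Φ a - cj φ (p n).1 a‖) atTop (nhds 0) := by
      have h0 := Filter.Tendsto.const_sub (Φ a) (hΦ a)
      rw [sub_self] at h0
      have h1 := h0.norm
      rwa [norm_zero] at h1
    have c3 : Tendsto (fun n => ((1:ℝ)/2)^n) atTop (nhds 0) :=
      tendsto_pow_atTop_nhds_zero_of_lt_one (by norm_num) (by norm_num)
    have hconv : Tendsto (fun n => ‖Ψ (Φ a) - cj ψ' (p n).2 (Φ a)‖
        + ‖Φ a - cj φ (p n).1 a‖ + (1/2:ℝ)^n) atTop (nhds 0) := by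
      have h4 := (c1.add c2).add c3
      rwa [add_zero, add_zero] at h4
    have hle : ‖Ψ (Φ a) - a‖ ≤ 0 :=
      ge_of_tendsto hconv (Filter.eventually_atTop.mpr ⟨i, h3⟩)
    have : ‖Ψ (Φ a) - a‖ = 0 := le_antisymm hle (norm_nonneg _)
    exact sub_eq_zero.mp (norm_eq_zero.mp this)
  have rightInvPt : ∀ i : ℕ, Φ (Ψ (dB i)) = dB i := by
    intro i
    set b := dB i with hb
    have h3 : ∀ n, i ≤ n → ‖Φ (Ψ b) - b‖ ≤ ‖Φ (Ψ b) - cj φ (p (n+1)).1 (Ψ b)‖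
        + ‖Ψ b - cj ψ' (p n).2 b‖ + (1/2:ℝ)^n := by
      intro n hn
      calc ‖Φ (Ψ b) - b‖
          ≤ ‖Φ (Ψ b) - cj φ (p (n+1)).1 (Ψ b)‖
            + ‖cj φ (p (n+1)).1 (Ψ b) - cj φ (p (n+1)).1 (cj ψ' (p n).2 b)‖
            + ‖cj φ (p (n+1)).1 (cj ψ' (p n).2 b) - b‖ := aux_tri3 _ _ _ _
        _ ≤ ‖Φ (Ψ b) - cj φ (p (n+1)).1 (Ψ b)‖ + ‖Ψ b - cj ψ' (p n).2 b‖ + (1/2:ℝ)^n := by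
            refine add_le_add (add_le_add le_rfl (LipA (hU (n+1)).1 _ _)) ?_
            exact (hQ1 n i hn).le
    have c1 : Tendsto (fun n => ‖Φ (Ψ b) - cj φ (p (n+1)).1 (Ψ b)‖) atTop (nhds 0) := by
      have h0 := Filter.Tendsto.const_sub (Φ (Ψ b)) ((hΦ (Ψ b)).comp (tendsto_add_atTop_nat 1))
      rw [sub_self] at h0
      have h1 := h0.norm
      rw [norm_zero] at h1
      exact h1
    have c2 : Tendsto (fun n => ‖Ψ b - cj ψ' (p n).2 b‖) atTop (nhds 0) := by
      have h0 := Filter.Tendsto.const_sub (Ψ b) (hΨ b)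
      rw [sub_self] at h0
      have h1 := h0.norm
      rwa [norm_zero] at h1
    have c3 : Tendsto (fun n => ((1:ℝ)/2)^n) atTop (nhds 0) :=
      tendsto_pow_atTop_nhds_zero_of_lt_one (by norm_num) (by norm_num)
    have hconv : Tendsto (fun n => ‖Φ (Ψ b) - cj φ (p (n+1)).1 (Ψ b)‖
        + ‖Ψ b - cj ψ' (p n).2 b‖ + (1/2:ℝ)^n) atTop (nhds 0) := by
      have h4 := (c1.add c2).add c3
      rwa [add_zero, add_zero] at h4
    have hle : ‖Φ (Ψ b) - b‖ ≤ 0 :=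
      ge_of_tendsto hconv (Filter.eventually_atTop.mpr ⟨i, h3⟩)
    have : ‖Φ (Ψ b) - b‖ = 0 := le_antisymm hle (norm_nonneg _)
    exact sub_eq_zero.mp (norm_eq_zero.mp this)
  have leftInv : ∀ a : A, Ψ (Φ a) = a := by
    have := hdA.equalizer (contΨ.comp contΦ) continuous_id
      (funext fun i => by simp [leftInvPt i])
    intro a
    exact congrFun this a
  have rightInv : ∀ b : B, Φ (Ψ b) = b := by
    have := hdB.equalizer (contΦ.comp contΨ) continuous_id
      (funext fun i => by simp [rightInvPt i])
    intro b
    exact congrFun this b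
  exact ⟨{ toFun := Φ, invFun := Ψ, left_inv := leftInv, right_inv := rightInv,
           map_mul' := mulΦ, map_add' := addΦ, map_smul' := smulΦ, map_star' := starΦ }⟩
end
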